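/- arXiv:2012.04784 — 6 statements merged into one kernel-verified Lean document; each statement's English description precedes it below -/
import Mathlib

section
/- With Q = (1/m) Σ_{k=1}^{m-1} k R^k, one has −Q(Id − R) = P_{Δ^⊥}, the orthogonal projection onto the orthogonal complement of the diagonal. -/
/-! Since `R ^ m = 1`, Abel summation turns `Q (1 - R)` into `(1/m) ∑_{k<m} R^k - 1`. The averaging
operator `(1/m) ∑_{k<m} R^k` sends `x` to the constant vector at the mean of its coordinates; that
vector lies in `Δ` and differs from `x` by a vector with coordinate sum zero, which is orthogonal to
`Δ`, so the averaging operator is `P`. -/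

open Finset Fin.NatCast

theorem Finset.sum_range_succ_eq_sum_range_of_eq {M : Type*} [AddCancelCommMonoid M] (f : ℕ → M)
    {n : ℕ} (h : f n = f 0) : ∑ k ∈ range n, f (k + 1) = ∑ k ∈ range n, f k := by
  have := (sum_range_succ' f n).symm.trans (sum_range_succ f n)
  rw [h] at this
  exact add_right_cancel this

theorem Finset.sum_range_natCast_smul_sub_succ {S E : Type*} [Ring S] [AddCommGroup E]
    [Module S E] (a : ℕ → E) (n : ℕ) :
    ∑ k ∈ range n, (k : S) • (a k - a (k + 1)) = ∑ k ∈ range n, a (k + 1) - (n : S) • a n := by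
  induction n with
  | zero => simp
  | succ n ih =>
    rw [sum_range_succ, sum_range_succ, ih, Nat.cast_succ, add_smul, one_smul, smul_sub]
    abel

theorem neg_inv_smul_sum_Icc_smul_pow_mul_one_sub {𝕜 A : Type*} [Field 𝕜] [CharZero 𝕜] [Ring A]
    [Algebra 𝕜 A] {m : ℕ} [NeZero m] {r : A} (hr : r ^ m = 1) :
    -(((m : 𝕜)⁻¹ • ∑ k ∈ Icc 1 (m - 1), (k : 𝕜) • r ^ k) * (1 - r)) =
      1 - (m : 𝕜)⁻¹ • ∑ k ∈ range m, r ^ k := by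
  have hm : (m : 𝕜) ≠ 0 := Nat.cast_ne_zero.mpr (NeZero.ne m)
  have hIcc : Icc 1 (m - 1) = Ico 1 m := by
    ext k
    simp only [mem_Icc, mem_Ico]
    omega
  have hsum : ∑ k ∈ Icc 1 (m - 1), (k : 𝕜) • r ^ k * (1 - r) =
      ∑ k ∈ range m, (k : 𝕜) • (r ^ k - r ^ (k + 1)) := by
    rw [hIcc, sum_range_eq_add_Ico _ (Nat.pos_of_neZero m)]
    simp only [Nat.cast_zero, zero_smul, zero_add, smul_mul_assoc, mul_sub, mul_one, pow_succ,
      smul_sub, sub_self]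
  rw [smul_mul_assoc, sum_mul, hsum, sum_range_natCast_smul_sub_succ,
    sum_range_succ_eq_sum_range_of_eq (r ^ ·) (by simp [hr]), hr, smul_sub, smul_smul,
    inv_mul_cancel₀ hm, one_smul, neg_sub]

theorem Submodule.eq_of_mem_of_sub_mem_orthogonal {𝕜 E : Type*} [RCLike 𝕜]
    [NormedAddCommGroup E] [InnerProductSpace 𝕜 E] {K : Submodule 𝕜 E} {x p q : E}
    (hp : p ∈ K) (hxp : x - p ∈ Kᗮ) (hq : q ∈ K) (hxq : x - q ∈ Kᗮ) : p = q := by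
  have hK : p - q ∈ K ⊓ Kᗮ :=
    ⟨K.sub_mem hp hq, by simpa using Kᗮ.sub_mem hxq hxp⟩
  rwa [K.inf_orthogonal_eq_bot, Submodule.mem_bot, sub_eq_zero] at hK

section CyclicShift

variable {X : Type*} [NormedAddCommGroup X] {m : ℕ}

local notation "𝐗" => PiLp 2 (fun _ : Fin m => X)

theorem mem_orthogonal_of_sum_eq_zero [InnerProductSpace ℝ X] {Δ : Submodule ℝ 𝐗} (hΔ : ∀ x, x ∈ Δ ↔ ∃ c : X, ∀ i, x i = c)
    {y : 𝐗} (hy : ∑ i, y i = 0) : y ∈ Δᗮ := by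
  rw [Submodule.mem_orthogonal]
  intro u hu
  obtain ⟨c, hc⟩ := (hΔ u).mp hu
  simp only [PiLp.inner_apply, hc, ← inner_sum, hy, inner_zero_right]

variable [NeZero m]

section Shift

variable [NormedSpace ℝ X]

theorem pow_apply_of_shift {R : 𝐗 →L[ℝ] 𝐗} (hR : ∀ (x : 𝐗) (i : Fin m), R x i = x (i - 1))
    (k : ℕ) (x : 𝐗) (i : Fin m) : (R ^ k) x i = x (i - k) := by
  induction k generalizing x with
  | zero => simp
  | succ k ih =>
    rw [pow_succ, mul_apply_eq_comp, ih, hR, Nat.cast_succ, sub_add_eq_sub_sub]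

theorem pow_card_eq_one_of_shift {R : 𝐗 →L[ℝ] 𝐗}
    (hR : ∀ (x : 𝐗) (i : Fin m), R x i = x (i - 1)) : R ^ m = 1 := by
  ext x i
  rw [pow_apply_of_shift hR, Fin.natCast_self, sub_zero]
  rfl

theorem sum_range_pow_apply_of_shift {R : 𝐗 →L[ℝ] 𝐗}
    (hR : ∀ (x : 𝐗) (i : Fin m), R x i = x (i - 1)) (x : 𝐗) (i : Fin m) :
    (∑ k ∈ range m, R ^ k) x i = ∑ j, x j := by
  simp only [_root_.sum_apply, WithLp.ofLp_sum, Finset.sum_apply, pow_apply_of_shift hR]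
  rw [← Fin.sum_univ_eq_sum_range (fun k => x (i - k))]
  simp only [Fin.cast_val_eq_self]
  exact Fintype.sum_equiv (Equiv.subLeft i) _ _ fun _ => rfl

end Shift

theorem eq_inv_smul_sum_range_pow_of_shift [InnerProductSpace ℝ X] {R : 𝐗 →L[ℝ] 𝐗}
    (hR : ∀ (x : 𝐗) (i : Fin m), R x i = x (i - 1)) {Δ : Submodule ℝ 𝐗}
    (hΔ : ∀ x, x ∈ Δ ↔ ∃ c : X, ∀ i, x i = c) {P : 𝐗 →L[ℝ] 𝐗}
    (hP : ∀ x, P x ∈ Δ ∧ x - P x ∈ Δᗮ) :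
    P = (m : ℝ)⁻¹ • ∑ k ∈ range m, R ^ k := by
  ext1 x
  have hm : (m : ℝ) ≠ 0 := Nat.cast_ne_zero.mpr (NeZero.ne m)
  have happly : ∀ i, ((m : ℝ)⁻¹ • ∑ k ∈ range m, R ^ k) x i = (m : ℝ)⁻¹ • ∑ j, x j := fun i => by
    rw [_root_.smul_apply, PiLp.smul_apply, sum_range_pow_apply_of_shift hR]
  refine Submodule.eq_of_mem_of_sub_mem_orthogonal (hP x).1 (hP x).2
    ((hΔ _).mpr ⟨_, happly⟩) (mem_orthogonal_of_sum_eq_zero hΔ ?_)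
  simp only [PiLp.sub_apply, happly, sum_sub_distrib, sum_const, card_univ, Fintype.card_fin,
    ← Nat.cast_smul_eq_nsmul ℝ, smul_smul, mul_inv_cancel₀ hm, one_smul, sub_self]

end CyclicShift

theorem stmt6_general {X : Type*} [NormedAddCommGroup X] [InnerProductSpace ℝ X]
    (m : ℕ) [NeZero m]
    (R : PiLp 2 (fun _ : Fin m => X) →L[ℝ] PiLp 2 (fun _ : Fin m => X))
    (hR : ∀ (x : PiLp 2 (fun _ : Fin m => X)) (i : Fin m), R x i = x (i - 1))
    (Δ : Submodule ℝ (PiLp 2 (fun _ : Fin m => X)))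
    (hΔ : ∀ x, x ∈ Δ ↔ ∃ c : X, ∀ i, x i = c)
    (P : PiLp 2 (fun _ : Fin m => X) →L[ℝ] PiLp 2 (fun _ : Fin m => X))
    (hP : ∀ x, P x ∈ Δ ∧ x - P x ∈ Δᗮ)
    (Q : PiLp 2 (fun _ : Fin m => X) →L[ℝ] PiLp 2 (fun _ : Fin m => X))
    (hQ : Q = (m : ℝ)⁻¹ • ∑ k ∈ Finset.Icc 1 (m - 1), (k : ℝ) • R ^ k) :
    -(Q.comp (1 - R)) = 1 - P := by
  rw [hQ, eq_inv_smul_sum_range_pow_of_shift hR hΔ hP]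
  exact neg_inv_smul_sum_Icc_smul_pow_mul_one_sub (pow_card_eq_one_of_shift hR)

theorem stmt6 {X : Type*} [NormedAddCommGroup X] [InnerProductSpace ℝ X] [CompleteSpace X]
    (m : ℕ) [NeZero m] (hm : 2 ≤ m)
    (R : PiLp 2 (fun _ : Fin m => X) →L[ℝ] PiLp 2 (fun _ : Fin m => X))
    (hR : ∀ (x : PiLp 2 (fun _ : Fin m => X)) (i : Fin m), R x i = x (i - 1))
    (Δ : Submodule ℝ (PiLp 2 (fun _ : Fin m => X)))
    (hΔ : ∀ x, x ∈ Δ ↔ ∃ c : X, ∀ i, x i = c)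
    (P : PiLp 2 (fun _ : Fin m => X) →L[ℝ] PiLp 2 (fun _ : Fin m => X))
    (hP : ∀ x, P x ∈ Δ ∧ x - P x ∈ Δᗮ)
    (Q : PiLp 2 (fun _ : Fin m => X) →L[ℝ] PiLp 2 (fun _ : Fin m => X))
    (hQ : Q = (m : ℝ)⁻¹ • ∑ k ∈ Finset.Icc 1 (m - 1), (k : ℝ) • R ^ k) :
    -(Q.comp (1 - R)) = 1 - P :=
  stmt6_general m R hR Δ hΔ P hP Q hQ
end

section
/- The operator (1/2) Id + T is invertible with inverse given by Id − R + 2 P_Δ; that is, ((1/2) Id + T)(Id − R + 2 P_Δ) = Id and (Id − R + 2 P_Δ)((1/2) Id + T) = Id. -/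
/-!
Everything lives in the commutative algebra generated by `R`, where `R ^ m = 1` and
`P = m⁻¹ ∑_{k<m} R ^ k`. Write `½ + T = (2m)⁻¹ Q` with `Q = ∑_{k<m} (m - 2k) R ^ k`.
Telescoping gives `(1 - R) Q = 2m - 2 ∑_{k<m} R ^ k`, i.e. `(1 - R)(½ + T) = 1 - P`, and since
`R ^ k P = P` and `∑_{k<m} (m - 2k) = m`, also `(½ + T) P = ½ P`. Hence
`(½ + T)(1 - R + 2P) = 1 - P + P = 1`, and the factors commute.
-/

open scoped RealInnerProductSpace
open Finset
open Fin.NatCast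

section CyclicElement

variable {A : Type*} [Ring A]

theorem pow_mul_geom_sum_of_pow_eq_one {r : A} {m : ℕ} (hr : r ^ m = 1) (k : ℕ) :
    r ^ k * ∑ i ∈ range m, r ^ i = ∑ i ∈ range m, r ^ i := by
  have h : r * ∑ i ∈ range m, r ^ i = ∑ i ∈ range m, r ^ i := by
    rw [← sub_eq_zero, ← sub_one_mul, mul_geom_sum, hr, sub_self]
  induction k with
  | zero => rw [pow_zero, one_mul]
  | succ k ih => rw [pow_succ, mul_assoc, h, ih]

variable [Algebra ℝ A]

theorem sum_range_sub_two_mul (c : ℝ) (n : ℕ) :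
    ∑ k ∈ range n, (c - 2 * k) = n * (c - n + 1) := by
  induction n with
  | zero => simp
  | succ n ih => rw [sum_range_succ, ih]; push_cast; ring

theorem one_sub_mul_sum_range_smul_pow (r : A) (c : ℝ) (n : ℕ) :
    (1 - r) * ∑ k ∈ range n, (c - 2 * k) • r ^ k =
      (c + 2) • (1 : A) - (2 : ℝ) • ∑ k ∈ range n, r ^ k - (c - 2 * n + 2) • r ^ n := by
  induction n with
  | zero => simp [sub_self]
  | succ n ih =>
    rw [sum_range_succ, mul_add, ih, sum_range_succ, mul_smul_comm, sub_mul, one_mul, ← pow_succ']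
    push_cast
    module

theorem commute_pow_sum_smul_pow (r : A) (s : Finset ℕ) (a : ℕ → ℝ) (k : ℕ) :
    Commute (r ^ k) (∑ i ∈ s, a i • r ^ i) :=
  Commute.sum_right _ _ _ fun i _ => ((Commute.refl r).pow_pow k i).smul_right _

theorem half_smul_one_add_smul_sum_Icc {m : ℕ} (hm : m ≠ 0) (r : A) :
    (1 / 2 : ℝ) • (1 : A) + (2 * m : ℝ)⁻¹ • ∑ k ∈ Icc 1 (m - 1), ((m : ℝ) - 2 * k) • r ^ k =
      (2 * m : ℝ)⁻¹ • ∑ k ∈ range m, ((m : ℝ) - 2 * k) • r ^ k := by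
  rw [Nat.range_eq_Icc_zero_sub_one m hm, ← insert_Icc_add_one_left_eq_Icc (Nat.zero_le _),
    sum_insert (by simp), zero_add, smul_add]
  have hm' : (m : ℝ) ≠ 0 := Nat.cast_ne_zero.2 hm
  congr 1
  simp only [CharP.cast_eq_zero, mul_zero, sub_zero, pow_zero, smul_smul]
  field_simp

theorem smul_sum_range_mul_eq_one_of_pow_eq_one {r : A} {m : ℕ} (hm : m ≠ 0) (hr : r ^ m = 1) :
    ((2 * m : ℝ)⁻¹ • ∑ k ∈ range m, ((m : ℝ) - 2 * k) • r ^ k) *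
        (1 - r + (2 : ℝ) • ((m : ℝ)⁻¹ • ∑ k ∈ range m, r ^ k)) = 1 ∧
      (1 - r + (2 : ℝ) • ((m : ℝ)⁻¹ • ∑ k ∈ range m, r ^ k)) *
        ((2 * m : ℝ)⁻¹ • ∑ k ∈ range m, ((m : ℝ) - 2 * k) • r ^ k) = 1 := by
  set S := ∑ k ∈ range m, r ^ k with hS
  set Q := ∑ k ∈ range m, ((m : ℝ) - 2 * k) • r ^ k with hQ
  have hrQ : Commute r Q := by simpa using commute_pow_sum_smul_pow r (range m) _ 1
  have hSQ : Commute S Q := Commute.sum_left _ _ _ fun k _ => commute_pow_sum_smul_pow r _ _ k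
  have hQ_sub : Q * (1 - r) = (2 * m : ℝ) • 1 - (2 : ℝ) • S := by
    rw [← ((Commute.one_left Q).sub_left hrQ).eq, hQ, one_sub_mul_sum_range_smul_pow, hr]
    module
  have hQ_S : Q * S = (m : ℝ) • S := by
    simp only [hQ, sum_mul, smul_mul_assoc, hS, pow_mul_geom_sum_of_pow_eq_one hr, ← sum_smul,
      sum_range_sub_two_mul]
    ring_nf
  have hm' : (m : ℝ) ≠ 0 := Nat.cast_ne_zero.2 hm
  have h : ((2 * m : ℝ)⁻¹ • Q) * (1 - r + (2 : ℝ) • ((m : ℝ)⁻¹ • S)) = 1 := by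
    rw [smul_mul_assoc, mul_add, hQ_sub, mul_smul_comm, mul_smul_comm, hQ_S]
    match_scalars <;> field_simp; ring
  have hcomm : Commute ((2 * m : ℝ)⁻¹ • Q) (1 - r + (2 : ℝ) • ((m : ℝ)⁻¹ • S)) :=
    (((Commute.one_right Q).sub_right hrQ.symm).add_right
      ((hSQ.symm.smul_right _).smul_right _)).smul_left _
  exact ⟨h, hcomm.eq ▸ h⟩

end CyclicElement

section CyclicShift

variable {X : Type*} [NormedAddCommGroup X] [InnerProductSpace ℝ X] {m : ℕ} [NeZero m]

local notation "𝐗" => PiLp 2 (fun _ : Fin m => X)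

theorem shift_pow_apply {R : 𝐗 →L[ℝ] 𝐗} (hR : ∀ x i, R x i = x (i - 1)) (k : ℕ) (x : 𝐗)
    (i : Fin m) : (R ^ k) x i = x (i - k) := by
  induction k generalizing i with
  | zero => simp
  | succ k ih => rw [pow_succ', mul_apply_eq_comp, hR, ih, Nat.cast_succ, sub_sub, add_comm]

theorem shift_pow_card {R : 𝐗 →L[ℝ] 𝐗} (hR : ∀ x i, R x i = x (i - 1)) : R ^ m = 1 := by
  ext x i
  rw [shift_pow_apply hR, Fin.natCast_self, sub_zero]
  rfl

theorem sum_range_shift_pow_apply {R : 𝐗 →L[ℝ] 𝐗} (hR : ∀ x i, R x i = x (i - 1)) (x : 𝐗)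
    (i : Fin m) : (∑ k ∈ range m, R ^ k) x i = ∑ j, x j := by
  simp only [_root_.sum_apply, WithLp.ofLp_sum, Finset.sum_apply, shift_pow_apply hR]
  rw [← Fin.sum_univ_eq_sum_range (fun k => x (i - k))]
  simp only [Fin.cast_val_eq_self]
  exact Fintype.sum_equiv (Equiv.subLeft i) _ _ fun _ => rfl

theorem diagonal_proj_apply {Δ : Submodule ℝ 𝐗} (hΔ : ∀ x, x ∈ Δ ↔ ∃ c : X, ∀ i, x i = c)
    {P : 𝐗 →L[ℝ] 𝐗} (hP : ∀ x, P x ∈ Δ ∧ x - P x ∈ Δᗮ) (x : 𝐗) (i : Fin m) :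
    P x i = (m : ℝ)⁻¹ • ∑ j, x j := by
  obtain ⟨c, hc⟩ := (hΔ (P x)).1 (hP x).1
  set w := ∑ j, x j - (m : ℝ) • c
  -- the constant vector `w` lies in `Δ`, and its inner product with `x - P x` is `⟪w, w⟫`
  have hw : w = 0 := by
    have h := (hP x).2 (WithLp.toLp 2 fun _ => w) ((hΔ _).2 ⟨w, fun _ => rfl⟩)
    rw [PiLp.inner_apply] at h
    simpa [hc, ← inner_sum, sum_sub_distrib, w, ← Nat.cast_smul_eq_nsmul ℝ] using h
  rw [hc i, sub_eq_zero.1 hw, smul_smul, inv_mul_cancel₀ (Nat.cast_ne_zero.2 (NeZero.ne m)),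
    one_smul]

theorem diagonal_proj_eq_smul_sum_shift_pow {R : 𝐗 →L[ℝ] 𝐗} (hR : ∀ x i, R x i = x (i - 1))
    {Δ : Submodule ℝ 𝐗} (hΔ : ∀ x, x ∈ Δ ↔ ∃ c : X, ∀ i, x i = c)
    {P : 𝐗 →L[ℝ] 𝐗} (hP : ∀ x, P x ∈ Δ ∧ x - P x ∈ Δᗮ) :
    P = (m : ℝ)⁻¹ • ∑ k ∈ range m, R ^ k := by
  ext x i
  rw [diagonal_proj_apply hΔ hP, _root_.smul_apply, PiLp.smul_apply,
    sum_range_shift_pow_apply hR]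

end CyclicShift

theorem stmt8_general {X : Type*} [NormedAddCommGroup X] [InnerProductSpace ℝ X]
    (m : ℕ) [NeZero m]
    (R : PiLp 2 (fun _ : Fin m => X) →L[ℝ] PiLp 2 (fun _ : Fin m => X))
    (hR : ∀ (x : PiLp 2 (fun _ : Fin m => X)) (i : Fin m), R x i = x (i - 1))
    (Δ : Submodule ℝ (PiLp 2 (fun _ : Fin m => X)))
    (hΔ : ∀ x, x ∈ Δ ↔ ∃ c : X, ∀ i, x i = c)
    (P : PiLp 2 (fun _ : Fin m => X) →L[ℝ] PiLp 2 (fun _ : Fin m => X))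
    (hP : ∀ x, P x ∈ Δ ∧ x - P x ∈ Δᗮ)
    (T : PiLp 2 (fun _ : Fin m => X) →L[ℝ] PiLp 2 (fun _ : Fin m => X))
    (hT : T = (2 * (m : ℝ))⁻¹ •
      ∑ k ∈ Finset.Icc 1 (m - 1), ((m : ℝ) - 2 * (k : ℝ)) • R ^ k) :
    ((1 / 2 : ℝ) • (1 : PiLp 2 (fun _ : Fin m => X) →L[ℝ] PiLp 2 (fun _ : Fin m => X)) + T)
        * (1 - R + (2 : ℝ) • P) = 1 ∧
    (1 - R + (2 : ℝ) • P) *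
        ((1 / 2 : ℝ) • (1 : PiLp 2 (fun _ : Fin m => X) →L[ℝ] PiLp 2 (fun _ : Fin m => X)) + T)
      = 1 := by
  rw [hT, half_smul_one_add_smul_sum_Icc (NeZero.ne m),
    diagonal_proj_eq_smul_sum_shift_pow hR hΔ hP]
  exact smul_sum_range_mul_eq_one_of_pow_eq_one (NeZero.ne m) (shift_pow_card hR)

theorem stmt8 {X : Type*} [NormedAddCommGroup X] [InnerProductSpace ℝ X] [CompleteSpace X]
    (m : ℕ) [NeZero m] (hm : 2 ≤ m)
    (R : PiLp 2 (fun _ : Fin m => X) →L[ℝ] PiLp 2 (fun _ : Fin m => X))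
    (hR : ∀ (x : PiLp 2 (fun _ : Fin m => X)) (i : Fin m), R x i = x (i - 1))
    (Δ : Submodule ℝ (PiLp 2 (fun _ : Fin m => X)))
    (hΔ : ∀ x, x ∈ Δ ↔ ∃ c : X, ∀ i, x i = c)
    (P : PiLp 2 (fun _ : Fin m => X) →L[ℝ] PiLp 2 (fun _ : Fin m => X))
    (hP : ∀ x, P x ∈ Δ ∧ x - P x ∈ Δᗮ)
    (T : PiLp 2 (fun _ : Fin m => X) →L[ℝ] PiLp 2 (fun _ : Fin m => X))
    (hT : T = (2 * (m : ℝ))⁻¹ •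
      ∑ k ∈ Finset.Icc 1 (m - 1), ((m : ℝ) - 2 * (k : ℝ)) • R ^ k) :
    ((1 / 2 : ℝ) • (1 : PiLp 2 (fun _ : Fin m => X) →L[ℝ] PiLp 2 (fun _ : Fin m => X)) + T)
        * (1 - R + (2 : ℝ) • P) = 1 ∧
    (1 - R + (2 : ℝ) • P) *
        ((1 / 2 : ℝ) • (1 : PiLp 2 (fun _ : Fin m => X) →L[ℝ] PiLp 2 (fun _ : Fin m => X)) + T)
      = 1 :=
  stmt8_general m R hR Δ hΔ P hP T hT
end

section
/- Let m = 2 and C_1, C_2 be nonempty closed convex subsets of X. Then the vector y = (P_{cl(C_2−C_1)}(0), P_{cl(C_1−C_2)}(0)) equals the projection of 0 onto the set 2·cl(Δ − 𝐂) in X², where 𝐂 = C_1 × C_2 and Δ is the diagonal of X². -/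
/-!
Write `D = cl(C₂ - C₁)`. A point `w ∈ X²` lies in `Δ - 𝐂` exactly when `w 0 - w 1 ∈ C₂ - C₁`, and
since `w ↦ w 0 - w 1` has a continuous section the same holds after taking closures with `D`.
As `cl(C₁ - C₂) = -D` and a convex set has at most one point of minimal norm, `y₂ = -y₁`, so
`y / 2 = (y₁ / 2, -y₁ / 2)` lies in `cl(Δ - 𝐂)`. For any `w ∈ cl(Δ - 𝐂)`,
`‖y‖² = 2‖y₁‖² ≤ 2‖w 0 - w 1‖² ≤ 4‖w‖² = ‖2w‖²`.
-/

open scoped Pointwise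

theorem Convex.eq_of_isMinOn_norm {E : Type*} [NormedAddCommGroup E] [NormedSpace ℝ E]
    [StrictConvexSpace ℝ E] {K : Set E} (hK : Convex ℝ K) {x y : E} (hx : x ∈ K) (hy : y ∈ K)
    (hx_min : IsMinOn (‖·‖) K x) (hy_min : IsMinOn (‖·‖) K y) : x = y := by
  by_contra hne
  have hmid : (1 / 2 : ℝ) • (x + y) ∈ K := by
    rw [smul_add]; exact hK hx hy (by norm_num) (by norm_num) (by norm_num)
  have hxy : ‖x‖ = ‖y‖ := le_antisymm (hx_min hy) (hy_min hx)
  exact ((norm_midpoint_lt_iff hxy).2 hne).not_ge (hx_min hmid)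

theorem Set.setOf_exists_eq_sub {G : Type*} [Sub G] (s t : Set G) :
    {w : G | ∃ a ∈ s, ∃ b ∈ t, w = a - b} = s - t := by
  ext w; simp [Set.mem_sub, eq_comm]

section Diagonal

variable {X : Type*} [SeminormedAddCommGroup X]

/-- `Δ - 𝐂` in `X²`, for `𝐂 = C₁ × C₂`. -/
def diagonalSub (C₁ C₂ : Set X) : Set (PiLp 2 (fun _ : Fin 2 => X)) :=
  {w | ∃ d : PiLp 2 (fun _ : Fin 2 => X), (∃ c : X, ∀ i, d i = c) ∧
    ∃ c : PiLp 2 (fun _ : Fin 2 => X), (c 0 ∈ C₁ ∧ c 1 ∈ C₂) ∧ w = d - c}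

theorem mem_diagonalSub_iff {C₁ C₂ : Set X} {w : PiLp 2 (fun _ : Fin 2 => X)} :
    w ∈ diagonalSub C₁ C₂ ↔ w 0 - w 1 ∈ C₂ - C₁ := by
  constructor
  · rintro ⟨d, ⟨x, hd⟩, c, ⟨hc₀, hc₁⟩, rfl⟩
    refine ⟨c 1, hc₁, c 0, hc₀, ?_⟩
    simp only [PiLp.sub_apply, hd, sub_sub_sub_cancel_left]
  · rintro ⟨c₂, hc₂, c₁, hc₁, h : c₂ - c₁ = w 0 - w 1⟩
    refine ⟨WithLp.toLp 2 fun _ => w 0 + c₁, ⟨_, fun _ => rfl⟩, WithLp.toLp 2 ![c₁, c₂],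
      ⟨hc₁, hc₂⟩, ?_⟩
    ext i; fin_cases i
    · simp
    · simp only [Fin.mk_one, PiLp.sub_apply, Matrix.cons_val_one, Matrix.cons_val_fin_one]
      linear_combination (norm := module) h

/-- The inclusion `⊇` holds because `a ↦ (w 1 + a, w 1)` is a continuous section of
`w ↦ w 0 - w 1` through `w`. -/
theorem closure_diagonalSub (C₁ C₂ : Set X) :
    closure (diagonalSub C₁ C₂) = {w | w 0 - w 1 ∈ closure (C₂ - C₁)} := by
  have hpre : diagonalSub C₁ C₂ =
      (fun w : PiLp 2 (fun _ : Fin 2 => X) => w 0 - w 1) ⁻¹' (C₂ - C₁) :=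
    Set.ext fun _ => mem_diagonalSub_iff
  apply subset_antisymm
  · rw [hpre]; exact Continuous.closure_preimage_subset (by fun_prop) _
  · intro w hw
    have hsection : WithLp.toLp 2 ![w 1 + (w 0 - w 1), w 1] = w := by
      ext i; fin_cases i <;> simp
    refine hsection ▸ map_mem_closure (f := fun a => WithLp.toLp 2 ![w 1 + a, w 1]) (by fun_prop)
      hw fun a ha => mem_diagonalSub_iff.2 ?_
    simpa using ha

theorem norm_sub_sq_le_two_mul_norm_sq (u : PiLp 2 (fun _ : Fin 2 => X)) :
    ‖u 0 - u 1‖ ^ 2 ≤ 2 * ‖u‖ ^ 2 := by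
  rw [PiLp.norm_sq_eq_of_L2, Fin.sum_univ_two]
  nlinarith [norm_sub_le (u 0) (u 1), norm_nonneg (u 0 - u 1), sq_nonneg (‖u 0‖ - ‖u 1‖)]

end Diagonal

theorem stmt14_general {X : Type*} [NormedAddCommGroup X] [InnerProductSpace ℝ X]
    (C₁ C₂ : Set X)
    (hC₁cv : Convex ℝ C₁)
    (hC₂cv : Convex ℝ C₂)
    (y₁ y₂ : X)
    (hy₁ : y₁ ∈ closure {w : X | ∃ c₂ ∈ C₂, ∃ c₁ ∈ C₁, w = c₂ - c₁} ∧
      ∀ w ∈ closure {w : X | ∃ c₂ ∈ C₂, ∃ c₁ ∈ C₁, w = c₂ - c₁}, ‖y₁‖ ≤ ‖w‖)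
    (hy₂ : y₂ ∈ closure {w : X | ∃ c₁ ∈ C₁, ∃ c₂ ∈ C₂, w = c₁ - c₂} ∧
      ∀ w ∈ closure {w : X | ∃ c₁ ∈ C₁, ∃ c₂ ∈ C₂, w = c₁ - c₂}, ‖y₂‖ ≤ ‖w‖)
    (Y : PiLp 2 (fun _ : Fin 2 => X)) (hY : Y 0 = y₁ ∧ Y 1 = y₂)
    (S : Set (PiLp 2 (fun _ : Fin 2 => X)))
    (hS : S = {x | ∃ w ∈ closure {w : PiLp 2 (fun _ : Fin 2 => X) |
        ∃ d : PiLp 2 (fun _ : Fin 2 => X), (∃ c : X, ∀ i, d i = c) ∧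
        ∃ c : PiLp 2 (fun _ : Fin 2 => X), (c 0 ∈ C₁ ∧ c 1 ∈ C₂) ∧ w = d - c},
      x = (2 : ℝ) • w}) :
    Y ∈ S ∧ ∀ s ∈ S, ‖Y‖ ≤ ‖s‖ := by
  simp only [Set.setOf_exists_eq_sub] at hy₁ hy₂
  obtain ⟨hy₁_mem, hy₁_min⟩ := hy₁
  obtain ⟨hy₂_mem, hy₂_min⟩ := hy₂
  obtain ⟨hY₀, hY₁⟩ := hY
  have hneg : closure (C₁ - C₂) = -closure (C₂ - C₁) := by rw [neg_closure, neg_sub]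
  have hy₂_eq : y₂ = -y₁ := by
    refine (hC₁cv.sub hC₂cv).closure.eq_of_isMinOn_norm hy₂_mem ?_ (isMinOn_iff.2 hy₂_min) ?_
    · rwa [hneg, Set.neg_mem_neg]
    · refine isMinOn_iff.2 fun w hw => ?_
      rw [hneg] at hw
      simpa using hy₁_min _ hw
  change S = {x | ∃ w ∈ closure (diagonalSub C₁ C₂), x = (2 : ℝ) • w} at hS
  simp only [closure_diagonalSub] at hS
  subst hS
  constructor
  · refine ⟨(1 / 2 : ℝ) • Y, ?_, by rw [smul_smul]; norm_num⟩
    rw [Set.mem_ofPred_eq, PiLp.smul_apply, PiLp.smul_apply, hY₀, hY₁, hy₂_eq]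
    convert hy₁_mem using 1; module
  · rintro _ ⟨w, hw, rfl⟩
    rw [← sq_le_sq₀ (norm_nonneg _) (norm_nonneg _)]
    calc ‖Y‖ ^ 2 = 2 * ‖y₁‖ ^ 2 := by
          rw [PiLp.norm_sq_eq_of_L2, Fin.sum_univ_two, hY₀, hY₁, hy₂_eq, norm_neg]; ring
      _ ≤ 2 * ‖w 0 - w 1‖ ^ 2 := by gcongr; exact hy₁_min _ hw
      _ ≤ 2 * (2 * ‖w‖ ^ 2) := by gcongr; exact norm_sub_sq_le_two_mul_norm_sq w
      _ = ‖(2 : ℝ) • w‖ ^ 2 := by rw [norm_smul]; norm_num; ring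

theorem stmt14 {X : Type*} [NormedAddCommGroup X] [InnerProductSpace ℝ X] [CompleteSpace X]
    (C₁ C₂ : Set X)
    (hC₁ne : C₁.Nonempty) (hC₁cl : IsClosed C₁) (hC₁cv : Convex ℝ C₁)
    (hC₂ne : C₂.Nonempty) (hC₂cl : IsClosed C₂) (hC₂cv : Convex ℝ C₂)
    (y₁ y₂ : X)
    (hy₁ : y₁ ∈ closure {w : X | ∃ c₂ ∈ C₂, ∃ c₁ ∈ C₁, w = c₂ - c₁} ∧
      ∀ w ∈ closure {w : X | ∃ c₂ ∈ C₂, ∃ c₁ ∈ C₁, w = c₂ - c₁}, ‖y₁‖ ≤ ‖w‖)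
    (hy₂ : y₂ ∈ closure {w : X | ∃ c₁ ∈ C₁, ∃ c₂ ∈ C₂, w = c₁ - c₂} ∧
      ∀ w ∈ closure {w : X | ∃ c₁ ∈ C₁, ∃ c₂ ∈ C₂, w = c₁ - c₂}, ‖y₂‖ ≤ ‖w‖)
    (Y : PiLp 2 (fun _ : Fin 2 => X)) (hY : Y 0 = y₁ ∧ Y 1 = y₂)
    (S : Set (PiLp 2 (fun _ : Fin 2 => X)))
    (hS : S = {x | ∃ w ∈ closure {w : PiLp 2 (fun _ : Fin 2 => X) |
        ∃ d : PiLp 2 (fun _ : Fin 2 => X), (∃ c : X, ∀ i, d i = c) ∧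
        ∃ c : PiLp 2 (fun _ : Fin 2 => X), (c 0 ∈ C₁ ∧ c 1 ∈ C₂) ∧ w = d - c},
      x = (2 : ℝ) • w}) :
    Y ∈ S ∧ ∀ s ∈ S, ‖Y‖ ≤ ‖s‖ :=
  stmt14_general C₁ C₂ hC₁cv hC₂cv y₁ y₂ hy₁ hy₂ Y hY S hS
end

section
/- Let C_1 = c_1 + ℝu_1 and C_2 = c_2 + ℝu_2 be two non-parallel lines (⟨u_1,u_2⟩² < 1, ‖u_1‖ = ‖u_2‖ = 1, c_i ⟂ u_i). Then there is exactly one cycle (z_1, z_2), given by z_i = c_i + ρ_i u_i with ρ_1 = (⟨u_1,c_2⟩ + ⟨u_1,u_2⟩⟨u_2,c_1⟩)/(1 − ⟨u_1,u_2⟩²) and ρ_2 = (⟨u_2,c_1⟩ + ⟨u_1,u_2⟩⟨u_1,c_2⟩)/(1 − ⟨u_1,u_2⟩²). -/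
open scoped RealInnerProductSpace

theorem stmt16 {X : Type*} [NormedAddCommGroup X] [InnerProductSpace ℝ X] [CompleteSpace X]
    (u₁ u₂ c₁ c₂ : X) (hu₁ : ‖u₁‖ = 1) (hu₂ : ‖u₂‖ = 1)
    (hc₁ : ⟪c₁, u₁⟫ = 0) (hc₂ : ⟪c₂, u₂⟫ = 0)
    (hnp : ⟪u₁, u₂⟫ ^ 2 < 1) :
    {p : X × X | p.1 = c₁ + ⟪u₁, p.2⟫ • u₁ ∧ p.2 = c₂ + ⟪u₂, p.1⟫ • u₂}
      = {(c₁ + ((⟪u₁, c₂⟫ + ⟪u₁, u₂⟫ * ⟪u₂, c₁⟫) / (1 - ⟪u₁, u₂⟫ ^ 2)) • u₁,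
          c₂ + ((⟪u₂, c₁⟫ + ⟪u₁, u₂⟫ * ⟪u₁, c₂⟫) / (1 - ⟪u₁, u₂⟫ ^ 2)) • u₂)} := by
  have hd : (1 : ℝ) - ⟪u₁, u₂⟫ ^ 2 ≠ 0 := by nlinarith
  have h11 : ⟪u₁, u₁⟫ = (1 : ℝ) := by
    rw [real_inner_self_eq_norm_sq, hu₁]; norm_num
  have h22 : ⟪u₂, u₂⟫ = (1 : ℝ) := by
    rw [real_inner_self_eq_norm_sq, hu₂]; norm_num
  have h21 : ⟪u₂, u₁⟫ = ⟪u₁, u₂⟫ := real_inner_comm _ _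
  have hc₁' : ⟪u₁, c₁⟫ = 0 := by rw [real_inner_comm]; exact hc₁
  have hc₂' : ⟪u₂, c₂⟫ = 0 := by rw [real_inner_comm]; exact hc₂
  ext p
  simp only [Set.mem_setOf_eq, Set.mem_singleton_iff, Prod.ext_iff]
  constructor
  · rintro ⟨h1, h2⟩
    set a := ⟪u₁, p.2⟫ with ha
    set b := ⟪u₂, p.1⟫ with hb
    have ea : a = ⟪u₁, c₂⟫ + b * ⟪u₁, u₂⟫ := by
      rw [ha, h2, inner_add_right, real_inner_smul_right]
    have eb : b = ⟪u₂, c₁⟫ + a * ⟪u₁, u₂⟫ := by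
      rw [hb, h1, inner_add_right, real_inner_smul_right, h21]
    have ha' : a = (⟪u₁, c₂⟫ + ⟪u₁, u₂⟫ * ⟪u₂, c₁⟫) / (1 - ⟪u₁, u₂⟫ ^ 2) := by
      field_simp
      linear_combination ea + ⟪u₁, u₂⟫ * eb
    have hb' : b = (⟪u₂, c₁⟫ + ⟪u₁, u₂⟫ * ⟪u₁, c₂⟫) / (1 - ⟪u₁, u₂⟫ ^ 2) := by
      field_simp
      linear_combination eb + ⟪u₁, u₂⟫ * ea
    exact ⟨by rw [h1, ha'], by rw [h2, hb']⟩
  · rintro ⟨h1, h2⟩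
    constructor
    · rw [h1, h2, inner_add_right, real_inner_smul_right]
      congr 2
      field_simp
      ring
    · rw [h2, h1, inner_add_right, real_inner_smul_right, h21]
      congr 2
      field_simp
      ring
end

section
/- For m = 3, the operator (1/2) Id − T, where T = (1/6)(R − R²) on X³ and R is the circular right shift, has operator norm 1/√3; equivalently the eigenvalues of ((1/2) Id − T)*((1/2) Id − T), represented as the 3×3 matrix acting blockwise, are 1/3 (with multiplicity two) and 1/4. -/
/-!
Writing `σ = x₀ + x₁ + x₂`, the map `S = ½ − T` acts by `(S x)ᵢ = ½ xᵢ − ⅙ xᵢ₋₁ + ⅙ xᵢ₋₂`,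
and expanding the norm gives `‖S x‖² = ⅓ ‖x‖² − (1/36) ‖σ‖²`. Hence `‖S‖ ≤ 1/√3`, with equality
on any nonzero `x` with `σ = 0`, such as `(v, −v, 0)`.
-/

open scoped RealInnerProductSpace

lemma ContinuousLinearMap.opNorm_eq_of_le_of_norm_apply_eq {E F : Type*}
    [NormedAddCommGroup E] [NormedSpace ℝ E] [SeminormedAddCommGroup F] [NormedSpace ℝ F]
    {f : E →L[ℝ] F} {M : ℝ} (hM : 0 ≤ M) (hle : ∀ x, ‖f x‖ ≤ M * ‖x‖)
    {x₀ : E} (hx₀ : x₀ ≠ 0) (heq : ‖f x₀‖ = M * ‖x₀‖) : ‖f‖ = M :=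
  le_antisymm (f.opNorm_le_bound hM hle)
    (le_of_mul_le_mul_right (heq ▸ f.le_opNorm x₀) (norm_pos_iff.mpr hx₀))

section Circulant

variable {X : Type*} [NormedAddCommGroup X] [InnerProductSpace ℝ X]

lemma norm_smul_add_smul_add_smul_sq (r s t : ℝ) (a b c : X) :
    ‖r • a + s • b + t • c‖ ^ 2 = r ^ 2 * ‖a‖ ^ 2 + s ^ 2 * ‖b‖ ^ 2 + t ^ 2 * ‖c‖ ^ 2
      + 2 * r * s * ⟪a, b⟫ + 2 * r * t * ⟪a, c⟫ + 2 * s * t * ⟪b, c⟫ := by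
  simp only [norm_add_sq_real, inner_add_left, norm_smul, mul_pow, Real.norm_eq_abs, sq_abs,
    real_inner_smul_left, real_inner_smul_right]
  ring

lemma norm_circulant_sq {x y : PiLp 2 (fun _ : Fin 3 => X)} (a b c : ℝ)
    (hy : ∀ i, y i = a • x i + b • x (i - 1) + c • x (i - 2)) :
    ‖y‖ ^ 2 = (a ^ 2 + b ^ 2 + c ^ 2) * ‖x‖ ^ 2
      + 2 * (a * b + b * c + c * a) * (⟪x 0, x 1⟫ + ⟪x 1, x 2⟫ + ⟪x 2, x 0⟫) := by
  simp only [PiLp.norm_sq_eq_of_L2, Fin.sum_univ_three, hy, Fin.reduceSub,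
    norm_smul_add_smul_add_smul_sq]
  rw [real_inner_comm (x 0) (x 1), real_inner_comm (x 1) (x 2), real_inner_comm (x 2) (x 0)]
  ring

lemma norm_sum_three_sq (x : PiLp 2 (fun _ : Fin 3 => X)) :
    ‖x 0 + x 1 + x 2‖ ^ 2 = ‖x‖ ^ 2 + 2 * (⟪x 0, x 1⟫ + ⟪x 1, x 2⟫ + ⟪x 2, x 0⟫) := by
  have h := norm_smul_add_smul_add_smul_sq 1 1 1 (x 0) (x 1) (x 2)
  simp only [one_smul] at h
  rw [h, PiLp.norm_sq_eq_of_L2, Fin.sum_univ_three, real_inner_comm (x 2) (x 0)]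
  ring

lemma norm_half_sub_shift_sq {x y : PiLp 2 (fun _ : Fin 3 => X)}
    (hy : ∀ i, y i = (1 / 2 : ℝ) • x i + (-6⁻¹ : ℝ) • x (i - 1) + (6⁻¹ : ℝ) • x (i - 2)) :
    ‖y‖ ^ 2 = 3⁻¹ * ‖x‖ ^ 2 - 36⁻¹ * ‖x 0 + x 1 + x 2‖ ^ 2 := by
  rw [norm_circulant_sq _ _ _ hy, norm_sum_three_sq]
  ring

lemma norm_half_sub_shift_le {x y : PiLp 2 (fun _ : Fin 3 => X)}
    (hy : ∀ i, y i = (1 / 2 : ℝ) • x i + (-6⁻¹ : ℝ) • x (i - 1) + (6⁻¹ : ℝ) • x (i - 2)) :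
    ‖y‖ ≤ (Real.sqrt 3)⁻¹ * ‖x‖ := by
  rw [← sq_le_sq₀ (norm_nonneg _) (by positivity), mul_pow, inv_pow,
    Real.sq_sqrt (by norm_num), norm_half_sub_shift_sq hy]
  nlinarith [sq_nonneg ‖x 0 + x 1 + x 2‖]

lemma norm_half_sub_shift_eq {x y : PiLp 2 (fun _ : Fin 3 => X)}
    (hy : ∀ i, y i = (1 / 2 : ℝ) • x i + (-6⁻¹ : ℝ) • x (i - 1) + (6⁻¹ : ℝ) • x (i - 2))
    (hx : x 0 + x 1 + x 2 = 0) :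
    ‖y‖ = (Real.sqrt 3)⁻¹ * ‖x‖ := by
  rw [← sq_eq_sq₀ (norm_nonneg _) (by positivity), mul_pow, inv_pow,
    Real.sq_sqrt (by norm_num), norm_half_sub_shift_sq hy, hx]
  simp

end Circulant

theorem stmt17_general {X : Type*} [NormedAddCommGroup X] [InnerProductSpace ℝ X]
    [Nontrivial X]
    (R : PiLp 2 (fun _ : Fin 3 => X) →L[ℝ] PiLp 2 (fun _ : Fin 3 => X))
    (hR : ∀ (x : PiLp 2 (fun _ : Fin 3 => X)) (i : Fin 3), R x i = x (i - 1))
    (T : PiLp 2 (fun _ : Fin 3 => X) →L[ℝ] PiLp 2 (fun _ : Fin 3 => X))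
    (hT : T = (6 : ℝ)⁻¹ • (R - R ^ 2)) :
    ‖(1 / 2 : ℝ) • (1 : PiLp 2 (fun _ : Fin 3 => X) →L[ℝ] PiLp 2 (fun _ : Fin 3 => X)) - T‖
      = (Real.sqrt 3)⁻¹ := by
  set S := (1 / 2 : ℝ) • (1 : PiLp 2 (fun _ : Fin 3 => X) →L[ℝ] PiLp 2 (fun _ : Fin 3 => X)) - T
  have hS : ∀ x i, S x i = (1 / 2 : ℝ) • x i + (-6⁻¹ : ℝ) • x (i - 1) + (6⁻¹ : ℝ) • x (i - 2) := by
    intro x i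
    have hR2 : (R ^ 2) x i = x (i - 2) := by
      rw [pow_two, mul_apply_eq_comp, hR, hR, sub_sub]
      rfl
    simp only [S, hT, sub_apply, smul_apply, one_apply_eq_self, PiLp.sub_apply, PiLp.smul_apply, hR, hR2]
    module
  obtain ⟨v, hv⟩ := exists_ne (0 : X)
  let x₀ : PiLp 2 (fun _ : Fin 3 => X) := WithLp.toLp 2 ![v, -v, 0]
  have hx₀ : x₀ ≠ 0 := fun h => hv (congrArg (· 0) h)
  exact ContinuousLinearMap.opNorm_eq_of_le_of_norm_apply_eq (by positivity)
    (fun x => norm_half_sub_shift_le (hS x)) hx₀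
    (norm_half_sub_shift_eq (hS x₀) (by simp [x₀]))

theorem stmt17 {X : Type*} [NormedAddCommGroup X] [InnerProductSpace ℝ X] [CompleteSpace X]
    [Nontrivial X]
    (R : PiLp 2 (fun _ : Fin 3 => X) →L[ℝ] PiLp 2 (fun _ : Fin 3 => X))
    (hR : ∀ (x : PiLp 2 (fun _ : Fin 3 => X)) (i : Fin 3), R x i = x (i - 1))
    (T : PiLp 2 (fun _ : Fin 3 => X) →L[ℝ] PiLp 2 (fun _ : Fin 3 => X))
    (hT : T = (6 : ℝ)⁻¹ • (R - R ^ 2)) :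
    ‖(1 / 2 : ℝ) • (1 : PiLp 2 (fun _ : Fin 3 => X) →L[ℝ] PiLp 2 (fun _ : Fin 3 => X)) - T‖
      = (Real.sqrt 3)⁻¹ :=
  stmt17_general R hR T hT
end

section
/- With γ = m/(m+2), the operator (1−γ) Id + γ R − 2γ P_Δ on X^m equals ((m−2)/(m+2)) R − (2/(m+2)) Σ_{k=2}^{m−1} R^k, and it is Lipschitz continuous with constant 3(m−2)/(m+2). -/
open scoped RealInnerProductSpace

theorem stmt18 {X : Type*} [NormedAddCommGroup X] [InnerProductSpace ℝ X] [CompleteSpace X]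
    (m : ℕ) [NeZero m] (hm : 2 ≤ m)
    (R : PiLp 2 (fun _ : Fin m => X) →L[ℝ] PiLp 2 (fun _ : Fin m => X))
    (hR : ∀ (x : PiLp 2 (fun _ : Fin m => X)) (i : Fin m), R x i = x (i - 1))
    (P : PiLp 2 (fun _ : Fin m => X) →L[ℝ] PiLp 2 (fun _ : Fin m => X))
    (hP : P = (m : ℝ)⁻¹ • ∑ k ∈ Finset.range m, R ^ k)
    (γ : ℝ) (hγ : γ = (m : ℝ) / ((m : ℝ) + 2)) :
    (1 - γ) • (1 : PiLp 2 (fun _ : Fin m => X) →L[ℝ] PiLp 2 (fun _ : Fin m => X))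
        + γ • R - (2 * γ) • P
      = (((m : ℝ) - 2) / ((m : ℝ) + 2)) • R
        - (2 / ((m : ℝ) + 2)) • ∑ k ∈ Finset.Icc 2 (m - 1), R ^ k ∧
    ∀ x y : PiLp 2 (fun _ : Fin m => X),
      ‖((1 - γ) • (1 : PiLp 2 (fun _ : Fin m => X) →L[ℝ] PiLp 2 (fun _ : Fin m => X))
          + γ • R - (2 * γ) • P) x
        - ((1 - γ) • (1 : PiLp 2 (fun _ : Fin m => X) →L[ℝ] PiLp 2 (fun _ : Fin m => X))
          + γ • R - (2 * γ) • P) y‖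
        ≤ (3 * ((m : ℝ) - 2) / ((m : ℝ) + 2)) * ‖x - y‖ := by
  have hm0 : (m : ℝ) ≠ 0 := Nat.cast_ne_zero.mpr (NeZero.ne m)
  have hm2 : (0:ℝ) < (m : ℝ) + 2 := by positivity
  have hmR : (2:ℝ) ≤ (m : ℝ) := by exact_mod_cast hm
  set S := ∑ k ∈ Finset.Icc 2 (m - 1), R ^ k with hS
  have hsplit : ∑ k ∈ Finset.range m, R ^ k = 1 + R + S := by
    have hset : Finset.range m = insert 0 (insert 1 (Finset.Icc 2 (m - 1))) := by
      ext k
      simp only [Finset.mem_range, Finset.mem_insert, Finset.mem_Icc]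
      omega
    rw [hset, Finset.sum_insert (by simp), Finset.sum_insert (by simp)]
    simp [hS, add_assoc]
  have c1 : (1 - γ) - 2 * γ * (m : ℝ)⁻¹ = 0 := by
    rw [hγ]; field_simp; ring
  have c2 : γ - 2 * γ * (m : ℝ)⁻¹ = ((m : ℝ) - 2) / ((m : ℝ) + 2) := by
    rw [hγ]; field_simp
  have c3 : 2 * γ * (m : ℝ)⁻¹ = 2 / ((m : ℝ) + 2) := by
    rw [hγ]; field_simp
  have key : (1 - γ) • (1 : PiLp 2 (fun _ : Fin m => X) →L[ℝ] PiLp 2 (fun _ : Fin m => X))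
        + γ • R - (2 * γ) • P
      = (((m : ℝ) - 2) / ((m : ℝ) + 2)) • R - (2 / ((m : ℝ) + 2)) • S := by
    rw [hP, hsplit, ← c2, ← c3]
    have h1 : ((1 - γ) - 2 * γ * (m : ℝ)⁻¹) •
        (1 : PiLp 2 (fun _ : Fin m => X) →L[ℝ] PiLp 2 (fun _ : Fin m => X)) = 0 := by
      rw [c1]
      exact zero_smul ℝ (1 : PiLp 2 (fun _ : Fin m => X) →L[ℝ] PiLp 2 (fun _ : Fin m => X))
    calc (1 - γ) • (1 : PiLp 2 (fun _ : Fin m => X) →L[ℝ] PiLp 2 (fun _ : Fin m => X))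
          + γ • R - (2 * γ) • ((m : ℝ)⁻¹ • (1 + R + S))
        = ((1 - γ) - 2 * γ * (m : ℝ)⁻¹) •
            (1 : PiLp 2 (fun _ : Fin m => X) →L[ℝ] PiLp 2 (fun _ : Fin m => X))
          + ((γ - 2 * γ * (m : ℝ)⁻¹) • R - (2 * γ * (m : ℝ)⁻¹) • S) := by module
      _ = (γ - 2 * γ * (m : ℝ)⁻¹) • R - (2 * γ * (m : ℝ)⁻¹) • S := by
          rw [h1, zero_add]
  refine ⟨key, fun x y => ?_⟩
  have hiso : ∀ z : PiLp 2 (fun _ : Fin m => X), ‖R z‖ = ‖z‖ := by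
    intro z
    rw [PiLp.norm_eq_sum (by norm_num), PiLp.norm_eq_sum (by norm_num)]
    congr 1
    simp only [hR]
    exact Fintype.sum_equiv (Equiv.subRight 1) _ _ (fun i => rfl)
  have hisok : ∀ (k : ℕ) (z : PiLp 2 (fun _ : Fin m => X)), ‖(R ^ k) z‖ = ‖z‖ := by
    intro k
    induction k with
    | zero => intro z; simp
    | succ n ih =>
        intro z
        rw [pow_succ, ContinuousLinearMap.mul_apply, ih, hiso]
  rw [key, ← map_sub]
  set z := x - y
  have hSz : ‖S z‖ ≤ ((m : ℝ) - 2) * ‖z‖ := by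
    have : ‖S z‖ ≤ ∑ k ∈ Finset.Icc 2 (m - 1), ‖(R ^ k) z‖ := by
      rw [hS, ContinuousLinearMap.sum_apply]
      exact norm_sum_le _ _
    calc ‖S z‖ ≤ ∑ k ∈ Finset.Icc 2 (m - 1), ‖(R ^ k) z‖ := this
      _ = ∑ k ∈ Finset.Icc 2 (m - 1), ‖z‖ := by
          exact Finset.sum_congr rfl fun k _ => hisok k z
      _ = ((m - 2 : ℕ) : ℝ) * ‖z‖ := by
          rw [Finset.sum_const, Nat.card_Icc]
          simp [nsmul_eq_mul]
          left; omega
      _ = ((m : ℝ) - 2) * ‖z‖ := by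
          rw [Nat.cast_sub hm]; norm_num
  have hz0 : (0:ℝ) ≤ ‖z‖ := norm_nonneg z
  calc ‖((((m : ℝ) - 2) / ((m : ℝ) + 2)) • R - (2 / ((m : ℝ) + 2)) • S) z‖
      = ‖(((m : ℝ) - 2) / ((m : ℝ) + 2)) • R z - (2 / ((m : ℝ) + 2)) • S z‖ := by
        simp [ContinuousLinearMap.sub_apply]
    _ ≤ ‖(((m : ℝ) - 2) / ((m : ℝ) + 2)) • R z‖ + ‖(2 / ((m : ℝ) + 2)) • S z‖ :=
        norm_sub_le _ _
    _ = (((m : ℝ) - 2) / ((m : ℝ) + 2)) * ‖z‖ + (2 / ((m : ℝ) + 2)) * ‖S z‖ := by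
        rw [norm_smul, norm_smul, hiso, Real.norm_eq_abs, Real.norm_eq_abs,
          abs_of_nonneg (div_nonneg (by linarith) hm2.le),
          abs_of_nonneg (div_nonneg (by norm_num) hm2.le)]
    _ ≤ (((m : ℝ) - 2) / ((m : ℝ) + 2)) * ‖z‖
          + (2 / ((m : ℝ) + 2)) * (((m : ℝ) - 2) * ‖z‖) := by
        have h2 : (0:ℝ) ≤ 2 / ((m : ℝ) + 2) := by positivity
        nlinarith [hSz]
    _ = (3 * ((m : ℝ) - 2) / ((m : ℝ) + 2)) * ‖z‖ := by
        have harith : ∀ a : ℝ, ((m:ℝ)-2)/((m:ℝ)+2)*a + 2/((m:ℝ)+2)*(((m:ℝ)-2)*a)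
            = 3*((m:ℝ)-2)/((m:ℝ)+2)*a := by
          intro a; field_simp; ring
        exact harith ‖z‖
end
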